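/- arXiv:2510.22365 — 2 statements merged into one kernel-verified Lean document; each statement's English description precedes it below -/
import Mathlib

section
/- Let n ≥ 2 and let S_1,...,S_n be a partition of T_{2n} into plane spanning trees with v_iw_i ∈ E(S_i). For each i with 1 ≤ i ≤ n−1, the subgraph of S_i induced by V_i = {v_i,...,v_n,w_n,...,w_i} is a balanced double star with center edge v_iw_i, containing the edges v_iw_{n-1}, v_iw_{n-2}, ..., v_iw_{i+1}, the edges w_iv_{n-1}, w_iv_{n-2}, ..., w_iv_{i+1}, and exactly one of the pairs {v_iw_n, w_iv_n} or {v_iv_n, w_iw_n}. -/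
/-!
By induction on `k`, every tree `S_j` with `j ≥ k` is connected on `V_k`. Planarity forbids `S_k`
any edge inside `V_{k+1}`, since it would be nested in the center edge `v_k w_k`; so on `V_k` the
tree `S_k` is a double star. The edges from `v_k` and `w_k` into `V_{k+1}` lie in trees `S_j` with
`j ≥ k` (for `j < k` they would again be nested), each later tree needs one at either end to stay
connected, and counting shows that it has exactly one. Hence `v_k` and `w_k` are leaves of the
later trees on `V_k`, which stay connected on `V_{k+1}`, and the double star is balanced.
A downward induction on `i` then places the leaves: an edge of `S_i` from `v_i` to some `u` on the
`v`-side would put `u w_i` into a later tree `S_j`, where it would enclose the edge from `w_j` to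
`v_n` or `w_n`.
-/

open SimpleGraph

/-- Two edges of the complete twisted graph cross: writing the edges as `{a,b}` and
`{c,d}` with `a < b` and `c < d` in the linear vertex order, they cross iff
`a < c < d < b` or `c < a < b < d`. -/
def Cross {m : ℕ} (e f : Sym2 (Fin m)) : Prop :=
  ∃ a b c d : Fin m, a < b ∧ c < d ∧ e = s(a, b) ∧ f = s(c, d) ∧
    ((a < c ∧ d < b) ∨ (c < a ∧ b < d))

/-- A subgraph of the twisted graph is plane if no two of its edges cross. -/
def IsPlane {m : ℕ} (G : SimpleGraph (Fin m)) : Prop :=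
  ∀ e ∈ G.edgeSet, ∀ f ∈ G.edgeSet, ¬ Cross e f

/-- A partition of the complete twisted graph `T_{2n}` into plane spanning trees:
`n` plane spanning trees such that every edge of the complete graph lies in
exactly one of them. -/
def IsTwistedPartition {n : ℕ} (S : Fin n → SimpleGraph (Fin (2 * n))) : Prop :=
  (∀ i, (S i).IsTree ∧ IsPlane (S i)) ∧
    ∀ u v : Fin (2 * n), u ≠ v → ∃! i, (S i).Adj u v

/-- The vertex `v_i` (1-indexed) of `T_{2n}`, i.e. vertex number `i - 1` in the
linear order `v_1 < v_2 < ... < v_n < w_n < ... < w_1`. -/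
def vv (n : ℕ) (hn : 0 < n) (i : ℕ) : Fin (2 * n) :=
  ⟨(i - 1) % (2 * n), Nat.mod_lt _ (by omega)⟩

/-- The vertex `w_i` (1-indexed) of `T_{2n}`, i.e. vertex number `2n - i` in the
linear order `v_1 < v_2 < ... < v_n < w_n < ... < w_1`. -/
def ww (n : ℕ) (hn : 0 < n) (i : ℕ) : Fin (2 * n) :=
  ⟨(2 * n - i) % (2 * n), Nat.mod_lt _ (by omega)⟩

open Finset

namespace SimpleGraph

variable {V : Type*} {G : SimpleGraph V}

theorem IsAcyclic.not_adj_of_adj_of_adj (hG : G.IsAcyclic) {a b c : V} (hab : G.Adj a b)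
    (hbc : G.Adj b c) : ¬ G.Adj c a := fun hca => by
  refine hG (Walk.cons hab (Walk.cons hbc (Walk.cons hca Walk.nil))) ?_
  have hac : a ≠ c := fun h => hca.ne h.symm
  simp [Walk.cons_isCycle_iff, hab.ne, hbc.ne, hca.ne, hac, hab.ne.symm]

theorem Preconnected.exists_adj_of_induce {s : Set V} (h : (G.induce s).Preconnected)
    {x y : V} (hx : x ∈ s) (hy : y ∈ s) (hxy : x ≠ y) : ∃ z ∈ s, G.Adj x z := by
  obtain ⟨p⟩ := h ⟨x, hx⟩ ⟨y, hy⟩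
  exact ⟨_, p.snd.2, p.adj_snd (Walk.not_nil_of_ne (by simpa using hxy))⟩

theorem Preconnected.induce_of_subsingleton_neighborSet_inter {s t : Set V}
    (h : (G.induce s).Preconnected) (hts : t ⊆ s)
    (hleaf : ∀ v ∈ s, v ∉ t → (G.neighborSet v ∩ s).Subsingleton) :
    (G.induce t).Preconnected := by
  have h' := h.induce_of_degree_eq_one (s := {x : s | x.1 ∈ t})
    fun v hv a ha b hb => Subtype.ext (hleaf v v.2 hv ⟨ha, a.2⟩ ⟨hb, b.2⟩)
  refine h'.map ⟨fun x => ⟨x.1.1, x.2⟩, id⟩ ?_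
  exact fun v => ⟨⟨⟨v.1, hts v.2⟩, v.2⟩, rfl⟩

end SimpleGraph

theorem IsPlane.not_nested {m : ℕ} {G : SimpleGraph (Fin m)} (hG : IsPlane G)
    {a b c d : Fin m} (hab : G.Adj a b) (hcd : G.Adj c d) (hac : a < c) (hcd' : c < d)
    (hdb : d < b) : False :=
  hG s(a, b) hab s(c, d) hcd
    ⟨a, b, c, d, hac.trans (hcd'.trans hdb), hcd', rfl, rfl, .inl ⟨hac, hdb⟩⟩

theorem Fin.card_filter_le_val_lt {m a b : ℕ} (hb : b ≤ m) :
    #{v : Fin m | a ≤ v.1 ∧ v.1 < b} = b - a := by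
  rw [← Nat.card_Ico, ← card_map Fin.valEmbedding]
  congr 1
  ext x
  simp only [mem_map, mem_filter, mem_univ, true_and, Fin.valEmbedding_apply, mem_Ico]
  exact ⟨fun ⟨v, hv, hvx⟩ => hvx ▸ hv, fun hx => ⟨⟨x, by omega⟩, hx, rfl⟩⟩

section

open scoped Classical

namespace IsTwistedPartition

variable {n : ℕ} {S : Fin n → SimpleGraph (Fin (2 * n))}

theorem eq_of_adj (hS : IsTwistedPartition S) {i j : Fin n} {u v : Fin (2 * n)}
    (hi : (S i).Adj u v) (hj : (S j).Adj u v) : i = j :=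
  (hS.2 u v hi.ne).unique hi hj

theorem sum_card_filter_adj (hS : IsTwistedPartition S) {x : Fin (2 * n)}
    {B : Finset (Fin (2 * n))} (hx : x ∉ B) : ∑ j, #{b ∈ B | (S j).Adj x b} = #B := by
  rw [show ∑ j, #{b ∈ B | (S j).Adj x b} =
      ∑ j, #(B.bipartiteAbove (fun j b => (S j).Adj x b) j) from rfl,
    sum_card_bipartiteAbove_eq_sum_card_bipartiteBelow, card_eq_sum_ones]
  refine sum_congr rfl fun b hb => card_eq_one_iff_existsUnique.mpr ?_
  simpa [bipartiteBelow] using hS.2 x b (ne_of_mem_of_not_mem hb hx).symm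

end IsTwistedPartition

variable {n : ℕ}

/-- `leftEnd i` and `rightEnd i` are `v_{i+1}` and `w_{i+1}`: the tree `S i` is the paper's
`S_{i+1}`. -/
def leftEnd (i : Fin n) : Fin (2 * n) := ⟨i, by omega⟩

def rightEnd (i : Fin n) : Fin (2 * n) := (leftEnd i).rev

@[simp] theorem val_leftEnd (i : Fin n) : (leftEnd i).1 = i := rfl

@[simp] theorem val_rightEnd (i : Fin n) : (rightEnd i).1 = 2 * n - 1 - i := by
  simp only [rightEnd, Fin.val_rev, val_leftEnd]; omega

/-- The paper's `V_{k+1}`. -/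
def layer (n k : ℕ) : Finset (Fin (2 * n)) := {v | k ≤ v.1 ∧ v.1 < 2 * n - k}

@[simp] theorem mem_layer {k : ℕ} {v : Fin (2 * n)} :
    v ∈ layer n k ↔ k ≤ v.1 ∧ v.1 < 2 * n - k := by
  simp [layer]

theorem card_layer (k : ℕ) : #(layer n k) = 2 * (n - k) := by
  rw [layer, Fin.card_filter_le_val_lt (by omega)]; omega

theorem layer_anti {k l : ℕ} (h : k ≤ l) : layer n l ⊆ layer n k := fun v hv => by
  simp only [mem_layer] at hv ⊢; omega

theorem mem_layer_succ_iff {i : Fin n} {v : Fin (2 * n)} :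
    v ∈ layer n (i + 1) ↔ v ∈ layer n i ∧ v ≠ leftEnd i ∧ v ≠ rightEnd i := by
  simp only [mem_layer, ne_eq, Fin.ext_iff, val_leftEnd, val_rightEnd]; omega

theorem leftEnd_mem_layer (i : Fin n) : leftEnd i ∈ layer n i := by
  simp only [mem_layer, val_leftEnd]; omega

theorem rightEnd_mem_layer (i : Fin n) : rightEnd i ∈ layer n i := by
  simp only [mem_layer, val_rightEnd]; omega

theorem layer_eq_insert (i : Fin n) :
    layer n i = insert (leftEnd i) (insert (rightEnd i) (layer n (i + 1))) := by
  ext v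
  by_cases h : v = leftEnd i ∨ v = rightEnd i
  · rcases h with rfl | rfl
    · exact iff_of_true (leftEnd_mem_layer i) (mem_insert_self _ _)
    · exact iff_of_true (rightEnd_mem_layer i) (mem_insert_of_mem (mem_insert_self _ _))
  · simp only [mem_insert, mem_layer_succ_iff]; tauto

theorem leftEnd_lt_rightEnd (i : Fin n) : leftEnd i < rightEnd i := by
  rw [Fin.lt_def, val_leftEnd, val_rightEnd]; omega

theorem end_mem_layer {i : Fin n} {x : Fin (2 * n)} (hx : x = leftEnd i ∨ x = rightEnd i) :
    x ∈ layer n i ∧ x ∉ layer n (i + 1) := by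
  rcases hx with rfl | rfl
  · exact ⟨leftEnd_mem_layer i, fun h => (mem_layer_succ_iff.mp h).2.1 rfl⟩
  · exact ⟨rightEnd_mem_layer i, fun h => (mem_layer_succ_iff.mp h).2.2 rfl⟩

structure IsCenteredPartition (S : Fin n → SimpleGraph (Fin (2 * n))) : Prop where
  isTwistedPartition : IsTwistedPartition S
  adj_center : ∀ i, (S i).Adj (leftEnd i) (rightEnd i)

namespace IsCenteredPartition

variable {S : Fin n → SimpleGraph (Fin (2 * n))}

theorem isPlane (hS : IsCenteredPartition S) (i : Fin n) : IsPlane (S i) :=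
  (hS.isTwistedPartition.1 i).2

theorem eq_of_adj_center (hS : IsCenteredPartition S) {i j : Fin n}
    (h : (S j).Adj (leftEnd i) (rightEnd i)) : j = i :=
  hS.isTwistedPartition.eq_of_adj h (hS.adj_center i)

theorem not_adj_of_mem_layer_succ (hS : IsCenteredPartition S) {i : Fin n} {a b : Fin (2 * n)}
    (ha : a ∈ layer n (i + 1)) (hb : b ∈ layer n (i + 1)) : ¬ (S i).Adj a b := by
  intro hab
  simp only [mem_layer] at ha hb
  rcases lt_trichotomy a b with h | rfl | h
  · exact (hS.isPlane i).not_nested (hS.adj_center i) hab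
      (by rw [Fin.lt_def, val_leftEnd]; omega) h (by rw [Fin.lt_def, val_rightEnd]; omega)
  · exact hab.ne rfl
  · exact (hS.isPlane i).not_nested (hS.adj_center i) hab.symm
      (by rw [Fin.lt_def, val_leftEnd]; omega) h (by rw [Fin.lt_def, val_rightEnd]; omega)

theorem not_adj_of_lt_leftEnd_of_rightEnd_lt (hS : IsCenteredPartition S) {j : Fin n}
    {a b : Fin (2 * n)} (ha : a < leftEnd j) (hb : rightEnd j < b) : ¬ (S j).Adj a b :=
  fun hab => (hS.isPlane j).not_nested hab (hS.adj_center j) ha (leftEnd_lt_rightEnd j) hb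

theorem mem_layer_succ_of_adj (hS : IsCenteredPartition S) {i j : Fin n} (hji : j ≠ i)
    {x z : Fin (2 * n)} (hx : x = leftEnd i ∨ x = rightEnd i) (hz : z ∈ layer n i)
    (hxz : (S j).Adj x z) : z ∈ layer n (i + 1) := by
  have hcenter : ¬ (S j).Adj (leftEnd i) (rightEnd i) := fun h => hji (hS.eq_of_adj_center h)
  refine mem_layer_succ_iff.mpr ⟨hz, ?_, ?_⟩ <;> rintro rfl <;> rcases hx with rfl | rfl
  · exact hxz.ne rfl
  · exact hcenter hxz.symm
  · exact hcenter hxz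
  · exact hxz.ne rfl

/-- A neighbour of `u` in `layer n i` must be an end of the center edge, as `S i` has no edge inside
`layer n (i + 1)`; and `u` cannot be joined to both ends, which would close a triangle. -/
theorem adj_leftEnd_iff_not_adj_rightEnd_of_preconnected (hS : IsCenteredPartition S) {i : Fin n}
    (hP : ((S i).induce (layer n i)).Preconnected) {u : Fin (2 * n)} (hu : u ∈ layer n (i + 1)) :
    (S i).Adj (leftEnd i) u ↔ ¬ (S i).Adj (rightEnd i) u := by
  refine ⟨fun h h' => (hS.isTwistedPartition.1 i).1.isAcyclic.not_adj_of_adj_of_adj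
    (hS.adj_center i) h' h.symm, fun h' => ?_⟩
  obtain ⟨huI, huc, -⟩ := mem_layer_succ_iff.mp hu
  obtain ⟨z, hz, huz⟩ := hP.exists_adj_of_induce huI (leftEnd_mem_layer i) huc
  have hzL : z ∉ layer n (i + 1) := fun hz' => hS.not_adj_of_mem_layer_succ hu hz' huz
  rw [mem_layer_succ_iff] at hzL
  push Not at hzL
  obtain rfl | rfl := (em (z = leftEnd i)).imp_right (hzL hz)
  · exact huz.symm
  · exact absurd huz.symm h'

theorem exists_adj_mem_layer_succ (hS : IsCenteredPartition S) {i j : Fin n} (hji : j ≠ i)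
    (hP : ((S j).induce (layer n i)).Preconnected) {x : Fin (2 * n)}
    (hx : x = leftEnd i ∨ x = rightEnd i) : ∃ z ∈ layer n (i + 1), (S j).Adj x z := by
  have hne := (leftEnd_lt_rightEnd i).ne
  obtain ⟨z, hz, hxz⟩ : ∃ z ∈ (layer n i : Set (Fin (2 * n))), (S j).Adj x z := by
    rcases hx with rfl | rfl
    · exact hP.exists_adj_of_induce (leftEnd_mem_layer i) (rightEnd_mem_layer i) hne
    · exact hP.exists_adj_of_induce (rightEnd_mem_layer i) (leftEnd_mem_layer i) hne.symm
  exact ⟨z, hS.mem_layer_succ_of_adj hji hx hz hxz, hxz⟩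

theorem card_filter_adj_add_sum_Ioi (hS : IsCenteredPartition S) (i : Fin n)
    {x : Fin (2 * n)} (hx : x = leftEnd i ∨ x = rightEnd i) :
    #{b ∈ layer n (i + 1) | (S i).Adj x b} +
      ∑ j ∈ Ioi i, #{b ∈ layer n (i + 1) | (S j).Adj x b}
      = 2 * (n - (i + 1)) := by
  obtain ⟨hxI, hxL⟩ := end_mem_layer hx
  rw [add_sum_Ioi_eq_sum_Ici (f := fun j => #{b ∈ layer n (i + 1) | (S j).Adj x b}),
    ← card_layer, ← hS.isTwistedPartition.sum_card_filter_adj hxL]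
  refine sum_subset (subset_univ _) fun j _ hj => card_eq_zero.mpr (filter_eq_empty_iff.mpr ?_)
  have hji : j.1 + 1 ≤ i := by simp only [mem_Ici, not_le] at hj; omega
  exact fun b hb => hS.not_adj_of_mem_layer_succ (layer_anti hji hxI)
    (layer_anti (by omega) hb)

/-- The `n - i - 1` trees after `S i` need at least one edge from each end of the center edge of
`S i` into the inner layer, while these ends have `4 (n - i - 1)` such edges in total, of which
`S i` takes `2 (n - i - 1)`: so each later tree takes exactly one at either end. -/
theorem card_filter_adj_eq_of_preconnected (hS : IsCenteredPartition S) {i : Fin n}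
    (hP : ∀ j, i ≤ j → ((S j).induce (layer n i)).Preconnected) :
    (∀ j, i < j → #{b ∈ layer n (i + 1) | (S j).Adj (leftEnd i) b} = 1 ∧
      #{b ∈ layer n (i + 1) | (S j).Adj (rightEnd i) b} = 1) ∧
    #{b ∈ layer n (i + 1) | (S i).Adj (leftEnd i) b} = n - (i + 1) ∧
    #{b ∈ layer n (i + 1) | (S i).Adj (rightEnd i) b} = n - (i + 1) := by
  have hv := hS.card_filter_adj_add_sum_Ioi i (.inl rfl)
  have hw := hS.card_filter_adj_add_sum_Ioi i (.inr rfl)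
  have hcenter : #{b ∈ layer n (i + 1) | (S i).Adj (leftEnd i) b} +
      #{b ∈ layer n (i + 1) | (S i).Adj (rightEnd i) b} = 2 * (n - (i + 1)) := by
    rw [← card_layer, ← card_filter_add_card_filter_not (s := layer n (i + 1))
      fun b => (S i).Adj (leftEnd i) b]
    congr 2
    exact filter_congr fun u hu => by
      rw [hS.adj_leftEnd_iff_not_adj_rightEnd_of_preconnected (hP i le_rfl) hu, not_not]
  have hpos : ∀ j ∈ Ioi i, ∀ x, x = leftEnd i ∨ x = rightEnd i →
      1 ≤ #{b ∈ layer n (i + 1) | (S j).Adj x b} := fun j hj x hx => by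
    obtain ⟨z, hz, hxz⟩ :=
      hS.exists_adj_mem_layer_succ (mem_Ioi.mp hj).ne' (hP j (mem_Ioi.mp hj).le) hx
    exact card_pos.mpr ⟨z, mem_filter.mpr ⟨hz, hxz⟩⟩
  have hsum : ∑ j ∈ Ioi i, (#{b ∈ layer n (i + 1) | (S j).Adj (leftEnd i) b} +
      #{b ∈ layer n (i + 1) | (S j).Adj (rightEnd i) b}) = ∑ j ∈ Ioi i, 2 := by
    rw [sum_add_distrib, sum_const, Fin.card_Ioi, smul_eq_mul]
    omega
  have htwo := (sum_eq_sum_iff_of_le fun j hj => by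
    have := hpos j hj _ (.inl rfl); have := hpos j hj _ (.inr rfl); omega).mp hsum.symm
  have hone : ∀ j, i < j → #{b ∈ layer n (i + 1) | (S j).Adj (leftEnd i) b} = 1 ∧
      #{b ∈ layer n (i + 1) | (S j).Adj (rightEnd i) b} = 1 := fun j hj => by
    have := htwo j (mem_Ioi.mpr hj)
    have := hpos j (mem_Ioi.mpr hj) _ (.inl rfl)
    have := hpos j (mem_Ioi.mpr hj) _ (.inr rfl)
    omega
  rw [sum_congr rfl fun j hj => (hone j (mem_Ioi.mp hj)).1] at hv
  rw [sum_congr rfl fun j hj => (hone j (mem_Ioi.mp hj)).2] at hw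
  simp only [sum_const, Fin.card_Ioi, smul_eq_mul, mul_one] at hv hw
  exact ⟨hone, by omega, by omega⟩

theorem preconnected_induce_layer_succ (hS : IsCenteredPartition S) {i j : Fin n} (hji : j ≠ i)
    (hP : ((S j).induce (layer n i)).Preconnected)
    (hv : #{b ∈ layer n (i + 1) | (S j).Adj (leftEnd i) b} = 1)
    (hw : #{b ∈ layer n (i + 1) | (S j).Adj (rightEnd i) b} = 1) :
    ((S j).induce (layer n (i + 1))).Preconnected := by
  refine hP.induce_of_subsingleton_neighborSet_inter (coe_subset.mpr (layer_anti (by omega)))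
    fun x hx hxL => ?_
  have hend : x = leftEnd i ∨ x = rightEnd i := by
    by_contra h
    push Not at h
    exact hxL (mem_layer_succ_iff.mpr ⟨hx, h⟩)
  have hle : #{b ∈ layer n (i + 1) | (S j).Adj x b} ≤ 1 := by
    rcases hend with rfl | rfl <;> omega
  intro a ⟨hxa, ha⟩ b ⟨hxb, hb⟩
  exact card_le_one.mp hle a (mem_filter.mpr ⟨hS.mem_layer_succ_of_adj hji hend ha hxa, hxa⟩)
    b (mem_filter.mpr ⟨hS.mem_layer_succ_of_adj hji hend hb hxb, hxb⟩)

theorem preconnected_induce_layer (hS : IsCenteredPartition S) (k : ℕ) (j : Fin n)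
    (hkj : k ≤ j) : ((S j).induce (layer n k)).Preconnected := by
  induction k generalizing j with
  | zero =>
    refine (hS.isTwistedPartition.1 j).1.connected.preconnected.induce_of_degree_eq_one
      fun v hv => absurd ?_ hv
    simp [layer]
  | succ k ih =>
    let i : Fin n := ⟨k, by omega⟩
    obtain ⟨hone, -⟩ := hS.card_filter_adj_eq_of_preconnected (i := i) fun j hj => ih j hj
    have hij : i < j := by rw [Fin.lt_def]; exact hkj
    exact hS.preconnected_induce_layer_succ hij.ne' (ih j (by omega)) (hone j hij).1 (hone j hij).2

theorem adj_leftEnd_iff_not_adj_rightEnd (hS : IsCenteredPartition S) {i : Fin n}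
    {u : Fin (2 * n)} (hu : u ∈ layer n (i + 1)) :
    (S i).Adj (leftEnd i) u ↔ ¬ (S i).Adj (rightEnd i) u :=
  hS.adj_leftEnd_iff_not_adj_rightEnd_of_preconnected (hS.preconnected_induce_layer i i le_rfl) hu

theorem card_filter_adj_end (hS : IsCenteredPartition S) (i : Fin n) {x : Fin (2 * n)}
    (hx : x = leftEnd i ∨ x = rightEnd i) :
    #{b ∈ layer n (i + 1) | (S i).Adj x b} = n - (i + 1) := by
  obtain ⟨-, hv, hw⟩ :=
    hS.card_filter_adj_eq_of_preconnected fun j hj => hS.preconnected_induce_layer i j hj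
  rcases hx with rfl | rfl
  · exact hv
  · exact hw

def AdjMiddle (S : Fin n → SimpleGraph (Fin (2 * n))) (i : Fin n) : Prop :=
  (∃ m ∈ layer n (n - 1), (S i).Adj (leftEnd i) m) ∧
    ∃ m ∈ layer n (n - 1), (S i).Adj (rightEnd i) m

/-- If `v_{i+1} u` with `u` on the `v`-side were an edge of `S i`, the edge `u w_{i+1}` would lie
in a later tree `S j`; there it would enclose the edge from `w_{j+1}` to the middle. -/
theorem not_adj_leftEnd_of_add_two_le (hS : IsCenteredPartition S) {i : Fin n}
    (hmid : ∀ j, i < j → j.1 + 2 ≤ n → AdjMiddle S j) {u : Fin (2 * n)}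
    (hu : u ∈ layer n (i + 1)) (hun : u.1 + 2 ≤ n) : ¬ (S i).Adj (leftEnd i) u := by
  intro h
  have h' := (hS.adj_leftEnd_iff_not_adj_rightEnd hu).mp h
  have huw := (mem_layer_succ_iff.mp hu).2.2
  obtain ⟨j, hj, -⟩ := hS.isTwistedPartition.2 u (rightEnd i) huw
  simp only [mem_layer] at hu
  have hij : i < j := by
    refine lt_of_not_ge fun hji => hji.lt_or_eq.elim (fun hji => ?_) fun hji => ?_
    · refine hS.not_adj_of_mem_layer_succ ?_ ?_ hj <;>
        simp only [mem_layer, val_rightEnd] <;> omega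
    · subst hji; exact h' hj.symm
  have hju : j.1 ≤ u.1 := by
    refine le_of_not_gt fun huj => hS.not_adj_of_lt_leftEnd_of_rightEnd_lt ?_ ?_ hj <;>
      simp only [Fin.lt_def, val_leftEnd, val_rightEnd] <;> omega
  obtain ⟨-, m, hm, hjm⟩ := hmid j hij (by omega)
  simp only [mem_layer] at hm
  refine (hS.isPlane j).not_nested hj hjm.symm ?_ ?_ ?_ <;>
    simp only [Fin.lt_def, val_rightEnd] <;> omega

theorem not_adj_rightEnd_of_lt (hS : IsCenteredPartition S) {i : Fin n}
    (hmid : ∀ j, i < j → j.1 + 2 ≤ n → AdjMiddle S j) {u : Fin (2 * n)}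
    (hu : u ∈ layer n (i + 1)) (hun : n < u.1) : ¬ (S i).Adj (rightEnd i) u := by
  intro h
  have h' : ¬ (S i).Adj (leftEnd i) u := fun h'' =>
    (hS.adj_leftEnd_iff_not_adj_rightEnd hu).mp h'' h
  have hvu := (mem_layer_succ_iff.mp hu).2.1
  obtain ⟨j, hj, -⟩ := hS.isTwistedPartition.2 (leftEnd i) u hvu.symm
  simp only [mem_layer] at hu
  have hij : i < j := by
    refine lt_of_not_ge fun hji => hji.lt_or_eq.elim (fun hji => ?_) fun hji => ?_
    · refine hS.not_adj_of_mem_layer_succ ?_ ?_ hj <;>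
        simp only [mem_layer, val_leftEnd] <;> omega
    · subst hji; exact h' hj
  have hju : u.1 + j.1 + 1 ≤ 2 * n := by
    refine le_of_not_gt fun huj => hS.not_adj_of_lt_leftEnd_of_rightEnd_lt ?_ ?_ hj <;>
      simp only [Fin.lt_def, val_leftEnd, val_rightEnd] <;> omega
  obtain ⟨⟨m, hm, hjm⟩, -⟩ := hmid j hij (by omega)
  simp only [mem_layer] at hm
  refine (hS.isPlane j).not_nested hj hjm ?_ ?_ ?_ <;>
    simp only [Fin.lt_def, val_leftEnd] <;> omega

/-- An end with no neighbour among `v_n, w_n` would have all its `n - i - 1` inner neighbours among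
the `n - i - 2` vertices on the opposite side. -/
theorem adjMiddle_of_forall_gt (hS : IsCenteredPartition S) {i : Fin n} (hi : i.1 + 2 ≤ n)
    (hmid : ∀ j, i < j → j.1 + 2 ≤ n → AdjMiddle S j) : AdjMiddle S i := by
  constructor
  · by_contra! h
    have hsub : {b ∈ layer n (i + 1) | (S i).Adj (leftEnd i) b} ⊆
        ({v | n + 1 ≤ v.1 ∧ v.1 < 2 * n - (i + 1)} : Finset (Fin (2 * n))) := fun b hb => by
      obtain ⟨hbL, hb⟩ := mem_filter.mp hb
      have h1 := mt (h b) (not_not.mpr hb)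
      have h2 := mt (hS.not_adj_leftEnd_of_add_two_le hmid hbL) (not_not.mpr hb)
      simp only [mem_layer] at hbL h1
      simp only [mem_filter, mem_univ, true_and]
      omega
    have := card_le_card hsub
    rw [hS.card_filter_adj_end i (.inl rfl), Fin.card_filter_le_val_lt (by omega)] at this
    omega
  · by_contra! h
    have hsub : {b ∈ layer n (i + 1) | (S i).Adj (rightEnd i) b} ⊆
        ({v | i + 1 ≤ v.1 ∧ v.1 < n - 1} : Finset (Fin (2 * n))) := fun b hb => by
      obtain ⟨hbL, hb⟩ := mem_filter.mp hb
      have h1 := mt (h b) (not_not.mpr hb)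
      have h2 := mt (hS.not_adj_rightEnd_of_lt hmid hbL) (not_not.mpr hb)
      simp only [mem_layer] at hbL h1
      simp only [mem_filter, mem_univ, true_and]
      omega
    have := card_le_card hsub
    rw [hS.card_filter_adj_end i (.inr rfl), Fin.card_filter_le_val_lt (by omega)] at this
    omega

theorem adjMiddle (hS : IsCenteredPartition S) (i : Fin n) (hi : i.1 + 2 ≤ n) :
    AdjMiddle S i := by
  induction i using WellFoundedGT.induction with
  | _ i ih => exact hS.adjMiddle_of_forall_gt hi fun j hij hj => ih j hij hj

theorem adj_leftEnd_of_lt (hS : IsCenteredPartition S) {i : Fin n} {u : Fin (2 * n)}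
    (hu : u ∈ layer n (i + 1)) (hun : n < u.1) : (S i).Adj (leftEnd i) u :=
  (hS.adj_leftEnd_iff_not_adj_rightEnd hu).mpr
    (hS.not_adj_rightEnd_of_lt (fun j _ hj => hS.adjMiddle j hj) hu hun)

theorem adj_rightEnd_of_add_two_le (hS : IsCenteredPartition S) {i : Fin n} {u : Fin (2 * n)}
    (hu : u ∈ layer n (i + 1)) (hun : u.1 + 2 ≤ n) : (S i).Adj (rightEnd i) u := by
  have h := hS.not_adj_leftEnd_of_add_two_le (fun j _ hj => hS.adjMiddle j hj) hu hun
  rwa [hS.adj_leftEnd_iff_not_adj_rightEnd hu, not_not] at h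

theorem xor_adj_middle (hS : IsCenteredPartition S) {i : Fin n} (hi : i.1 + 2 ≤ n)
    {m m' : Fin (2 * n)} (hm : m.1 = n - 1) (hm' : m'.1 = n) :
    Xor ((S i).Adj (leftEnd i) m' ∧ (S i).Adj (rightEnd i) m)
      ((S i).Adj (leftEnd i) m ∧ (S i).Adj (rightEnd i) m') := by
  have h := hS.adj_leftEnd_iff_not_adj_rightEnd (i := i) (u := m)
    (by simp only [mem_layer]; omega)
  have h' := hS.adj_leftEnd_iff_not_adj_rightEnd (i := i) (u := m')
    (by simp only [mem_layer]; omega)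
  have hmiddle : ∀ v ∈ layer n (n - 1), v = m ∨ v = m' := fun v hv => by
    simp only [mem_layer] at hv; simp only [Fin.ext_iff]; omega
  obtain ⟨⟨a, ha, hva⟩, b, hb, hwb⟩ := hS.adjMiddle i hi
  rcases hmiddle a ha with rfl | rfl <;> rcases hmiddle b hb with rfl | rfl <;> unfold Xor <;> tauto

theorem ncard_neighborSet_inter_layer (hS : IsCenteredPartition S) (i : Fin n) {x : Fin (2 * n)}
    (hx : x = leftEnd i ∨ x = rightEnd i) :
    ((S i).neighborSet x ∩ layer n i).ncard = n - (i + 1) + 1 := by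
  have hcoe : (S i).neighborSet x ∩ layer n i = ↑({b ∈ layer n i | (S i).Adj x b}) := by
    ext; simp [and_comm]
  have hv := (end_mem_layer (i := i) (.inl rfl)).2
  have hw := (end_mem_layer (i := i) (.inr rfl)).2
  rw [hcoe, Set.ncard_coe_finset, ← hS.card_filter_adj_end i hx, layer_eq_insert]
  rcases hx with rfl | rfl
  · rw [filter_insert, if_neg (SimpleGraph.irrefl _), filter_insert, if_pos (hS.adj_center i),
      card_insert_of_notMem fun h => hw (mem_filter.mp h).1]
  · rw [filter_insert, if_pos (hS.adj_center i).symm, filter_insert, if_neg (SimpleGraph.irrefl _),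
      card_insert_of_notMem fun h => hv (mem_filter.mp h).1]

end IsCenteredPartition

theorem val_vv (hn : 0 < n) {j : ℕ} (hj : j ≤ 2 * n) : (vv n hn j).1 = j - 1 :=
  Nat.mod_eq_of_lt (by omega)

theorem val_ww (hn : 0 < n) {j : ℕ} (hj : 0 < j) : (ww n hn j).1 = 2 * n - j :=
  Nat.mod_eq_of_lt (by omega)

theorem vv_succ_eq_leftEnd (hn : 0 < n) (i : Fin n) : vv n hn (i + 1) = leftEnd i :=
  Fin.ext (by rw [val_vv hn (by omega), val_leftEnd]; rfl)

theorem ww_succ_eq_rightEnd (hn : 0 < n) (i : Fin n) : ww n hn (i + 1) = rightEnd i :=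
  Fin.ext (by rw [val_ww hn (by omega), val_rightEnd]; omega)

theorem exists_eq_vv_or_ww_iff (hn : 0 < n) {k : ℕ} {u : Fin (2 * n)} :
    (∃ j, k + 1 ≤ j ∧ j ≤ n ∧ (u = vv n hn j ∨ u = ww n hn j)) ↔ u ∈ layer n k := by
  rw [mem_layer]
  constructor
  · rintro ⟨j, hj1, hj2, rfl | rfl⟩
    · rw [val_vv hn (by omega)]; omega
    · rw [val_ww hn (by omega)]; omega
  · intro hu
    rcases lt_or_ge u.1 n with h | h
    · exact ⟨u.1 + 1, by omega, by omega, .inl (Fin.ext (by rw [val_vv hn (by omega)]; omega))⟩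
    · exact ⟨2 * n - u.1, by omega, by omega,
        .inr (Fin.ext (by rw [val_ww hn (by omega)]; omega))⟩

end

theorem induced_subgraph_is_balanced_double_star_general
    (n : ℕ) (hn : 0 < n) (S : Fin n → SimpleGraph (Fin (2 * n)))
    (hS : IsTwistedPartition S)
    (hc : ∀ i : Fin n, (S i).Adj (vv n hn (i.1 + 1)) (ww n hn (i.1 + 1))) :
    ∀ i : Fin n, i.1 + 1 ≤ n - 1 →
      (∀ u : Fin (2 * n),
          (∃ j, i.1 + 1 ≤ j ∧ j ≤ n ∧ (u = vv n hn j ∨ u = ww n hn j)) →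
          u ≠ vv n hn (i.1 + 1) → u ≠ ww n hn (i.1 + 1) →
          ((S i).Adj (vv n hn (i.1 + 1)) u ↔ ¬ (S i).Adj (ww n hn (i.1 + 1)) u)) ∧
      (∀ u u' : Fin (2 * n),
          (∃ j, i.1 + 1 ≤ j ∧ j ≤ n ∧ (u = vv n hn j ∨ u = ww n hn j)) →
          (∃ j, i.1 + 1 ≤ j ∧ j ≤ n ∧ (u' = vv n hn j ∨ u' = ww n hn j)) →
          u ≠ vv n hn (i.1 + 1) → u ≠ ww n hn (i.1 + 1) →
          u' ≠ vv n hn (i.1 + 1) → u' ≠ ww n hn (i.1 + 1) →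
          ¬ (S i).Adj u u') ∧
      ((S i).neighborSet (vv n hn (i.1 + 1)) ∩
          {u | ∃ j, i.1 + 1 ≤ j ∧ j ≤ n ∧ (u = vv n hn j ∨ u = ww n hn j)}).ncard
        = n - (i.1 + 1) + 1 ∧
      ((S i).neighborSet (ww n hn (i.1 + 1)) ∩
          {u | ∃ j, i.1 + 1 ≤ j ∧ j ≤ n ∧ (u = vv n hn j ∨ u = ww n hn j)}).ncard
        = n - (i.1 + 1) + 1 ∧
      (∀ j : ℕ, i.1 + 2 ≤ j → j ≤ n - 1 →
        (S i).Adj (vv n hn (i.1 + 1)) (ww n hn j) ∧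
        (S i).Adj (ww n hn (i.1 + 1)) (vv n hn j)) ∧
      Xor'
        ((S i).Adj (vv n hn (i.1 + 1)) (ww n hn n) ∧
          (S i).Adj (ww n hn (i.1 + 1)) (vv n hn n))
        ((S i).Adj (vv n hn (i.1 + 1)) (vv n hn n) ∧
          (S i).Adj (ww n hn (i.1 + 1)) (ww n hn n)) := by
  have hS' : IsCenteredPartition S :=
    ⟨hS, fun i => by simpa only [vv_succ_eq_leftEnd, ww_succ_eq_rightEnd] using hc i⟩
  intro i hi
  simp only [vv_succ_eq_leftEnd hn, ww_succ_eq_rightEnd hn, exists_eq_vv_or_ww_iff hn]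
  have hinner {u} (hu : u ∈ layer n i) (hv : u ≠ leftEnd i) (hw : u ≠ rightEnd i) :
      u ∈ layer n (i + 1) :=
    mem_layer_succ_iff.mpr ⟨hu, hv, hw⟩
  refine ⟨fun u hu hv hw => hS'.adj_leftEnd_iff_not_adj_rightEnd (hinner hu hv hw),
    fun u u' hu hu' hv hw hv' hw' => hS'.not_adj_of_mem_layer_succ (hinner hu hv hw)
      (hinner hu' hv' hw'),
    hS'.ncard_neighborSet_inter_layer i (.inl rfl), hS'.ncard_neighborSet_inter_layer i (.inr rfl),
    fun j hj hjn => ⟨hS'.adj_leftEnd_of_lt ?_ ?_, hS'.adj_rightEnd_of_add_two_le ?_ ?_⟩,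
    hS'.xor_adj_middle (by omega) (val_vv hn (by omega))
      (by rw [val_ww hn hn]; omega)⟩
  all_goals simp only [mem_layer, val_vv hn (by omega : j ≤ 2 * n), val_ww hn (by omega : 0 < j)]
  all_goals omega

/-- In any partition of `T_{2n}` into plane spanning trees with `v_i w_i ∈ E(S_i)`,
for `1 ≤ i ≤ n - 1` the subgraph of `S_i` induced by
`V_i = {v_i, ..., v_n, w_n, ..., w_i}` is a balanced double star with center edge
`v_i w_i`, containing the edges `v_i w_{n-1}, ..., v_i w_{i+1}`, the edges
`w_i v_{n-1}, ..., w_i v_{i+1}` and exactly one of the pairs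
`{v_i w_n, w_i v_n}` or `{v_i v_n, w_i w_n}`.  Here the tree `S_i` is `S ⟨i-1,_⟩`,
i.e. the vertex index of the center of `S i` is `i.1 + 1`. -/
theorem induced_subgraph_is_balanced_double_star
    (n : ℕ) (hn : 0 < n) (hn2 : 2 ≤ n) (S : Fin n → SimpleGraph (Fin (2 * n)))
    (hS : IsTwistedPartition S)
    (hc : ∀ i : Fin n, (S i).Adj (vv n hn (i.1 + 1)) (ww n hn (i.1 + 1))) :
    ∀ i : Fin n, i.1 + 1 ≤ n - 1 →
      (∀ u : Fin (2 * n),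
          (∃ j, i.1 + 1 ≤ j ∧ j ≤ n ∧ (u = vv n hn j ∨ u = ww n hn j)) →
          u ≠ vv n hn (i.1 + 1) → u ≠ ww n hn (i.1 + 1) →
          ((S i).Adj (vv n hn (i.1 + 1)) u ↔ ¬ (S i).Adj (ww n hn (i.1 + 1)) u)) ∧
      (∀ u u' : Fin (2 * n),
          (∃ j, i.1 + 1 ≤ j ∧ j ≤ n ∧ (u = vv n hn j ∨ u = ww n hn j)) →
          (∃ j, i.1 + 1 ≤ j ∧ j ≤ n ∧ (u' = vv n hn j ∨ u' = ww n hn j)) →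
          u ≠ vv n hn (i.1 + 1) → u ≠ ww n hn (i.1 + 1) →
          u' ≠ vv n hn (i.1 + 1) → u' ≠ ww n hn (i.1 + 1) →
          ¬ (S i).Adj u u') ∧
      ((S i).neighborSet (vv n hn (i.1 + 1)) ∩
          {u | ∃ j, i.1 + 1 ≤ j ∧ j ≤ n ∧ (u = vv n hn j ∨ u = ww n hn j)}).ncard
        = n - (i.1 + 1) + 1 ∧
      ((S i).neighborSet (ww n hn (i.1 + 1)) ∩
          {u | ∃ j, i.1 + 1 ≤ j ∧ j ≤ n ∧ (u = vv n hn j ∨ u = ww n hn j)}).ncard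
        = n - (i.1 + 1) + 1 ∧
      (∀ j : ℕ, i.1 + 2 ≤ j → j ≤ n - 1 →
        (S i).Adj (vv n hn (i.1 + 1)) (ww n hn j) ∧
        (S i).Adj (ww n hn (i.1 + 1)) (vv n hn j)) ∧
      Xor'
        ((S i).Adj (vv n hn (i.1 + 1)) (ww n hn n) ∧
          (S i).Adj (ww n hn (i.1 + 1)) (vv n hn n))
        ((S i).Adj (vv n hn (i.1 + 1)) (vv n hn n) ∧
          (S i).Adj (ww n hn (i.1 + 1)) (ww n hn n)) :=
  induced_subgraph_is_balanced_double_star_general n hn S hS hc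
end

section
/- In the complete twisted graph T_{2n} (n ≥ 1), for each k ∈ {1,...,n}, the double star A_k is a plane spanning tree: no two of its edges cross. -/
/-!
In the linear order the centers `v_n` and `w_n` sit at the adjacent positions `n - 1` and `n`,
every edge of `A_k` has one of them as an endpoint, and every other vertex has exactly one
neighbour; so `A_k` is a double star, hence a tree. Crossing edges are nested with four distinct
endpoints, so a crossing pair would be an edge at `v_n` and one at `w_n` whose leaves lie on the
same side of the centers, the leaf of `w_n` first. But on each side all leaves of `v_n` come
before all leaves of `w_n`: `v_1, ..., v_{n-k}` before `v_{n-k+1}, ..., v_{n-1}`, and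
`w_{n-1}, ..., w_{n-k+1}` before `w_{n-k}, ..., w_1`.
-/

open SimpleGraph

/-- The spanning balanced double star `A_k` of `T_{2n}` with center edge `v_n w_n`,
in which `v_n` is adjacent to `v_1, ..., v_{n-k}` and `w_n, w_{n-1}, ..., w_{n-k+1}`,
and `w_n` is adjacent to `w_1, ..., w_{n-k}` and `v_n, v_{n-1}, ..., v_{n-k+1}`. -/
def Ak (n : ℕ) (hn : 0 < n) (k : ℕ) : SimpleGraph (Fin (2 * n)) :=
  SimpleGraph.fromEdgeSet
    ({s(vv n hn n, ww n hn n)} ∪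
      {e | ∃ j, 1 ≤ j ∧ j ≤ n - k ∧
        (e = s(vv n hn n, vv n hn j) ∨ e = s(ww n hn n, ww n hn j))} ∪
      {e | ∃ j, n - k + 1 ≤ j ∧ j ≤ n - 1 ∧
        (e = s(vv n hn n, ww n hn j) ∨ e = s(ww n hn n, vv n hn j))})

/-- The spanning balanced double star `A'_i` of `T_{2n}` with center edge `v_i w_i`,
in which `v_i` is adjacent to `w_{i+1}, ..., w_n` and `v_1, ..., v_{i-1}`, and
`w_i` is adjacent to `v_{i+1}, ..., v_n` and `w_1, ..., w_{i-1}`. -/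
def A' (n : ℕ) (hn : 0 < n) (i : ℕ) : SimpleGraph (Fin (2 * n)) :=
  SimpleGraph.fromEdgeSet
    ({s(vv n hn i, ww n hn i)} ∪
      {e | ∃ j, i + 1 ≤ j ∧ j ≤ n ∧
        (e = s(vv n hn i, ww n hn j) ∨ e = s(ww n hn i, vv n hn j))} ∪
      {e | ∃ j, 1 ≤ j ∧ j ≤ i - 1 ∧
        (e = s(vv n hn i, vv n hn j) ∨ e = s(ww n hn i, ww n hn j))})

namespace SimpleGraph

variable {V : Type*} {G : SimpleGraph V}

theorem isAcyclic_of_neighborSet_subsingleton (p q : V)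
    (h : ∀ x, x ≠ p → x ≠ q → (G.neighborSet x).Subsingleton) : G.IsAcyclic := by
  intro v c hc
  -- a cycle has at least three distinct vertices, each with two neighbours on the cycle
  obtain ⟨x, hx, hxp, hxq⟩ : ∃ x ∈ c.support.tail, x ≠ p ∧ x ≠ q := by
    by_contra! hpq
    have hsub : c.support.tail ⊆ [p, q] := fun x hx => by
      simpa using (em (x = p)).imp_right (hpq x hx)
    have hlen := (List.subperm_of_subset hc.support_nodup hsub).length_le
    have h3 := hc.three_le_length
    simp only [List.length_tail, Walk.length_support, List.length_cons, List.length_nil] at hlen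
    omega
  obtain ⟨y, z, hyz, hyz_eq⟩ := Set.ncard_eq_two.mp
    (hc.ncard_neighborSet_toSubgraph_eq_two (List.mem_of_mem_tail hx))
  have hsub := hyz_eq ▸ c.toSubgraph.neighborSet_subset x
  exact hyz (h x hxp hxq (hsub (by simp)) (hsub (by simp)))

theorem connected_of_adj_of_forall_eq_or_adj {p q : V} (hpq : G.Adj p q)
    (h : ∀ x, x = p ∨ G.Adj p x ∨ G.Adj q x) : G.Connected := by
  have hp : ∀ x, G.Reachable p x := fun x => by
    rcases h x with rfl | hx | hx
    · rfl
    · exact hx.reachable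
    · exact hpq.reachable.trans hx.reachable
  have : Nonempty V := ⟨p⟩
  exact Connected.mk fun x y => (hp x).symm.trans (hp y)

end SimpleGraph

section DoubleStar

variable {n : ℕ} (hn : 0 < n) {k : ℕ}

theorem vv_val {j : ℕ} (hj : j ≤ 2 * n) : (vv n hn j).val = j - 1 :=
  Nat.mod_eq_of_lt (by omega)

theorem ww_val {j : ℕ} (hj : 1 ≤ j) : (ww n hn j).val = 2 * n - j :=
  Nat.mod_eq_of_lt (by omega)

/-- The edges of `A_k` in positions of the linear order (`v_j` at `j - 1`, `w_j` at `2n - j`),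
each written from its endpoint `v_n` (position `n - 1`) or `w_n` (position `n`): the center
edge, then the edges to `v_1, ..., v_{n-k}`, to `w_1, ..., w_{n-k}`, to
`w_{n-1}, ..., w_{n-k+1}` and to `v_{n-1}, ..., v_{n-k+1}`. -/
def IsAkEdge (n k a b : ℕ) : Prop :=
  a = n - 1 ∧ b = n ∨ a = n - 1 ∧ b + k < n ∨ a = n ∧ n + k ≤ b ∨
    a = n - 1 ∧ n < b ∧ b < n + k ∨ a = n ∧ n ≤ b + k ∧ b + 1 < n

variable {hn}

theorem isAkEdge_of_adj {x y : Fin (2 * n)} (h : (Ak n hn k).Adj x y) :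
    IsAkEdge n k x y ∨ IsAkEdge n k y x := by
  obtain ⟨he, hne⟩ := fromEdgeSet_adj _ |>.mp h
  have hne := Fin.val_ne_of_ne hne
  simp only [Set.mem_union, Set.mem_singleton_iff, Set.mem_ofPred_eq] at he
  rcases he with (he | ⟨j, hj1, hj2, he | he⟩) | ⟨j, hj1, hj2, he | he⟩ <;>
    simp (disch := omega) only [Sym2.eq_iff, Fin.ext_iff, vv_val, ww_val] at he <;>
    (rcases he with ⟨hx, hy⟩ | ⟨hx, hy⟩ <;> [left; right]) <;>
    unfold IsAkEdge <;> omega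

theorem adj_of_isAkEdge (hk : 1 ≤ k) {x y : Fin (2 * n)} (h : IsAkEdge n k x y) :
    (Ak n hn k).Adj x y := by
  refine (fromEdgeSet_adj _).mpr ⟨?_, fun hxy => by subst hxy; unfold IsAkEdge at h; omega⟩
  simp only [Set.mem_union, Set.mem_singleton_iff, Set.mem_ofPred_eq]
  rcases h with ⟨hx, hy⟩ | ⟨hx, hy⟩ | ⟨hx, hy⟩ | ⟨hx, hy⟩ | ⟨hx, hy⟩ <;>
    [refine .inl (.inl ?_);
     refine .inl (.inr ⟨y + 1, by omega, by omega, .inl ?_⟩);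
     refine .inl (.inr ⟨2 * n - y, by omega, by omega, .inr ?_⟩);
     refine .inr ⟨2 * n - y, by omega, by omega, .inl ?_⟩;
     refine .inr ⟨y + 1, by omega, by omega, .inr ?_⟩] <;>
    simp (disch := omega) only [Sym2.eq_iff, Fin.ext_iff, vv_val, ww_val] <;> omega

theorem ak_neighborSet_subsingleton {x : Fin (2 * n)} (hxv : x ≠ vv n hn n)
    (hxw : x ≠ ww n hn n) : ((Ak n hn k).neighborSet x).Subsingleton := by
  intro y hy z hz
  simp (disch := omega) only [ne_eq, Fin.ext_iff, vv_val, ww_val] at hxv hxw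
  have hy := isAkEdge_of_adj hy
  have hz := isAkEdge_of_adj hz
  unfold IsAkEdge at hy hz
  exact Fin.ext (by omega)

theorem ak_adj_vv_ww (hk : 1 ≤ k) : (Ak n hn k).Adj (vv n hn n) (ww n hn n) :=
  adj_of_isAkEdge hk (.inl ⟨vv_val hn (by omega), by rw [ww_val hn hn]; omega⟩)

theorem ak_eq_or_adj_center (hk : 1 ≤ k) (x : Fin (2 * n)) :
    x = vv n hn n ∨ (Ak n hn k).Adj (vv n hn n) x ∨ (Ak n hn k).Adj (ww n hn n) x := by
  have hv : (vv n hn n).val = n - 1 := vv_val hn (by omega)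
  have hw : (ww n hn n).val = n := by rw [ww_val hn hn]; omega
  by_cases hx : x.val = n - 1
  · exact .inl (Fin.ext (by omega))
  by_cases hxv : x.val = n ∨ x.val + k < n ∨ n < x.val ∧ x.val < n + k
  · exact .inr (.inl (adj_of_isAkEdge hk (by unfold IsAkEdge; omega)))
  · exact .inr (.inr (adj_of_isAkEdge hk (by unfold IsAkEdge; omega)))

theorem ak_isPlane : IsPlane (Ak n hn k) := by
  rintro _ he _ hf ⟨a, b, c, d, hab, hcd, rfl, rfl, hcross⟩
  have he := isAkEdge_of_adj he
  have hf := isAkEdge_of_adj hf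
  simp only [IsAkEdge, Fin.lt_def] at he hf hab hcd hcross
  omega

end DoubleStar

theorem Ak_is_plane_spanning_tree_general (n : ℕ) (hn : 0 < n) (k : ℕ)
    (hk1 : 1 ≤ k) :
    (Ak n hn k).IsTree ∧ IsPlane (Ak n hn k) := by
  refine ⟨⟨?_, ?_⟩, ak_isPlane⟩
  · exact connected_of_adj_of_forall_eq_or_adj (ak_adj_vv_ww hk1) (ak_eq_or_adj_center hk1)
  · exact isAcyclic_of_neighborSet_subsingleton _ _ fun _ hv hw =>
      ak_neighborSet_subsingleton hv hw

/-- For `1 ≤ k ≤ n`, the double star `A_k` is a plane spanning tree of `T_{2n}`. -/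
theorem Ak_is_plane_spanning_tree (n : ℕ) (hn : 0 < n) (k : ℕ)
    (hk1 : 1 ≤ k) (hk2 : k ≤ n) :
    (Ak n hn k).IsTree ∧ IsPlane (Ak n hn k) :=
  Ak_is_plane_spanning_tree_general n hn k hk1
end
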